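/- arXiv:2010.01894 — 5 statements merged into one kernel-verified Lean document; each statement's English description precedes it below -/
import Mathlib

section
/- Let h, u be quaternions satisfying h*u - u*h = u^2 + 1. Then u is purely imaginary (Re u = 0), u has unit norm (|u|^2 = 1, equivalently u^2 = -1), and u commutes with h (h*u = u*h). -/
open scoped Quaternion

/-!
Write `c = h * u - u * h`. Since `re (x * y) = re (y * x)`, both `re c` and `re (c * star u)` vanish,
the latter because `u * star u` and `star u * u` are the same real scalar `normSq u`.
For `c = u ^ 2 + 1` the second condition reads `re u * (normSq u + 1) = 0`, so `re u = 0`;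
then `u ^ 2 = -normSq u`, and the first condition gives `normSq u = 1`, i.e. `u ^ 2 = -1`,
whence `c = 0`.
-/

namespace Quaternion

section CommRing

variable {R : Type*} [CommRing R]

theorem re_mul_comm (a b : ℍ[R]) : (a * b).re = (b * a).re := by
  simp only [re_mul]
  ring

theorem re_commutator (h u : ℍ[R]) : (h * u - u * h).re = 0 := by
  rw [re_sub, re_mul_comm, sub_self]

theorem re_commutator_mul_star (h u : ℍ[R]) : ((h * u - u * h) * star u).re = 0 := by
  rw [sub_mul, re_sub, mul_assoc, mul_assoc, re_mul_comm u, mul_assoc, self_mul_star,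
    star_mul_self, sub_self]

theorem re_sq_add_one_mul_star (u : ℍ[R]) : ((u ^ 2 + 1) * star u).re = u.re * (normSq u + 1) := by
  rw [add_mul, one_mul, sq, mul_assoc, self_mul_star, re_add, re_star, mul_coe_eq_smul, re_smul,
    smul_eq_mul]
  ring

end CommRing

section OrderedCommRing

variable {R : Type*} [CommRing R] [LinearOrder R] [IsStrictOrderedRing R]

theorem re_eq_zero_of_commutator_eq_sq_add_one {h u : ℍ[R]} (hyp : h * u - u * h = u ^ 2 + 1) :
    u.re = 0 := by
  have key : u.re * (normSq u + 1) = 0 := by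
    rw [← re_sq_add_one_mul_star, ← hyp, re_commutator_mul_star]
  exact (mul_eq_zero.mp key).resolve_right (add_pos_of_nonneg_of_pos normSq_nonneg one_pos).ne'

theorem sq_eq_neg_one_of_commutator_eq_sq_add_one {h u : ℍ[R]}
    (hyp : h * u - u * h = u ^ 2 + 1) : u ^ 2 = -1 := by
  have hsq : u ^ 2 = -normSq u := sq_eq_neg_normSq.mpr (re_eq_zero_of_commutator_eq_sq_add_one hyp)
  have hnorm : normSq u = 1 := by
    have := re_commutator h u
    rw [hyp, hsq, re_add, re_neg, re_coe, re_one] at this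
    exact neg_add_eq_zero.mp this
  rw [hsq, hnorm, coe_one]

end OrderedCommRing

end Quaternion

/-- If `h*u - u*h = u^2 + 1`, then `u` is purely imaginary, `u^2 = -1`, and
`u` commutes with `h`. -/
theorem versor_of_commutator_eq_sq_add_one (h u : ℍ[ℝ])
    (hyp : h * u - u * h = u ^ 2 + 1) :
    u.re = 0 ∧ u ^ 2 = -1 ∧ h * u = u * h := by
  have hsq := Quaternion.sq_eq_neg_one_of_commutator_eq_sq_add_one hyp
  refine ⟨Quaternion.re_eq_zero_of_commutator_eq_sq_add_one hyp, hsq, ?_⟩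
  rw [← sub_eq_zero, hyp, hsq, neg_add_cancel]
end

section
/- Let N be a 2×2 matrix over the quaternions. If θ * N * θ† = 0 for every row vector θ ∈ ℍ², then N = 0. -/
/-!
Polarizing the vanishing form `θ N θ†` at `θ = eᵢ`, `η = q eⱼ` gives `N i j * q̄ + q * N j i = 0`
for every quaternion `q`. Taking `q = 1` gives `N j i = -N i j`, and then `q = i, j, k` force the
real part and the three imaginary parts of `N i j` to vanish.
-/

open scoped Quaternion

namespace Quaternion

variable {R : Type*} [CommRing R] [NoZeroDivisors R] [CharZero R]

theorem eq_zero_of_forall_mul_star_add_mul_eq_zero {a b : ℍ[R]}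
    (h : ∀ q : ℍ[R], a * star q + q * b = 0) : a = 0 := by
  obtain rfl : b = -a := eq_neg_of_add_eq_zero_right (by simpa using h 1)
  -- An anonymous constructor would have type `ℍ[R,-1,0,-1]`, out of reach of the `ℍ[R]` simp lemmas.
  have hq v := h ((equivTuple R).symm v)
  have hi := hq ![0, 1, 0, 0]
  have hj := hq ![0, 0, 1, 0]
  have hk := hq ![0, 0, 0, 1]
  simp only [Quaternion.ext_iff, re_add, imI_add, imJ_add, imK_add, re_mul, imI_mul, imJ_mul,
    imK_mul, re_star, imI_star, imJ_star, imK_star, re_neg, imI_neg, imJ_neg, imK_neg, re_zero,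
    imI_zero, imJ_zero, imK_zero] at hi hj hk
  obtain ⟨hI, hre⟩ : a.imI = 0 ∧ a.re = 0 := by simpa using hi
  obtain ⟨hJ, -⟩ : a.imJ = 0 ∧ a.re = 0 := by simpa using hj
  obtain ⟨hK, -⟩ : a.imK = 0 ∧ a.re = 0 := by simpa using hk
  ext <;> simp [hre, hI, hJ, hK]

end Quaternion

namespace Matrix

variable {n : Type*} [Fintype n]

theorem dotProduct_mulVec_star_add_swap_eq_zero {α : Type*} [NonUnitalNonAssocSemiring α]
    [StarAddMonoid α] {N : Matrix n n α} (h : ∀ θ, θ ⬝ᵥ (N *ᵥ star θ) = 0) (θ η : n → α) :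
    θ ⬝ᵥ (N *ᵥ star η) + η ⬝ᵥ (N *ᵥ star θ) = 0 := by
  have := h (θ + η)
  simp only [star_add, mulVec_add, dotProduct_add, add_dotProduct, h θ, h η] at this
  rwa [zero_add, add_zero, add_comm] at this

theorem eq_zero_of_forall_dotProduct_mulVec_star_eq_zero [DecidableEq n] {R : Type*} [CommRing R]
    [NoZeroDivisors R] [CharZero R] {N : Matrix n n ℍ[R]}
    (h : ∀ θ, θ ⬝ᵥ (N *ᵥ star θ) = 0) : N = 0 := by
  refine Matrix.ext fun i j => ?_
  refine Quaternion.eq_zero_of_forall_mul_star_add_mul_eq_zero (b := N j i) fun q => ?_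
  simpa [← Pi.single_star, mulVec_single] using
    dotProduct_mulVec_star_add_swap_eq_zero h (Pi.single i 1) (Pi.single j q)

end Matrix

/-- If `θ * N * θ† = 0` for every row vector `θ ∈ ℍ²`, then `N = 0`. -/
theorem eq_zero_of_quadratic_form_zero (N : Matrix (Fin 2) (Fin 2) ℍ[ℝ])
    (hyp : ∀ θ : Fin 2 → ℍ[ℝ],
      ∑ i, ∑ j, θ i * N i j * star (θ j) = 0) : N = 0 := by
  refine Matrix.eq_zero_of_forall_dotProduct_mulVec_star_eq_zero fun θ => ?_
  simpa only [dotProduct, Matrix.mulVec, Pi.star_apply, Finset.mul_sum, mul_assoc] using hyp θ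
end

section
/- Let b, q, u, r be quaternions with b ≠ 0 and q ≠ 0. If b*q is real, b*u*q is real, and b*r is real, then b*u*r is also real. -/
open scoped Quaternion

/-!
Since `b u b⁻¹ = (b u q) (b q)⁻¹`, the conjugate of `u` by `b` is a scalar. Scalars are central,
so `u` itself is a scalar and `b u r = u (b r)` is a product of scalars.
-/

section DivisionRing

variable {K A : Type*} [Field K] [DivisionRing A] [Algebra K A]

theorem mem_bot_of_conj_mem_bot {b u : A} (hb : b ≠ 0)
    (h : b * u * b⁻¹ ∈ (⊥ : Subalgebra K A)) : u ∈ (⊥ : Subalgebra K A) := by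
  obtain ⟨s, hs⟩ := Algebra.mem_bot.mp h
  have hu : u = b⁻¹ * (b * u * b⁻¹) * b := by
    simp only [mul_assoc, inv_mul_cancel₀ hb, mul_one, ← mul_assoc b⁻¹ b, one_mul]
  rw [hu, ← hs, mul_assoc, Algebra.commutes, inv_mul_cancel_left₀ hb]
  exact Subalgebra.algebraMap_mem _ s

theorem mem_bot_of_mul_mem_bot_of_mul_mul_mem_bot {b q u : A} (hb : b ≠ 0) (hq : q ≠ 0)
    (hbq : b * q ∈ (⊥ : Subalgebra K A)) (hbuq : b * u * q ∈ (⊥ : Subalgebra K A)) :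
    u ∈ (⊥ : Subalgebra K A) := by
  obtain ⟨t, ht⟩ := Algebra.mem_bot.mp hbq
  obtain ⟨s, hs⟩ := Algebra.mem_bot.mp hbuq
  have hconj : b * u * b⁻¹ = algebraMap K A (s / t) := by
    rw [map_div₀, hs, ht, div_eq_mul_inv, mul_inv_rev, mul_assoc (b * u), mul_inv_cancel_left₀ hq]
  exact mem_bot_of_conj_mem_bot hb (hconj ▸ Subalgebra.algebraMap_mem _ _)

end DivisionRing

theorem Quaternion.exists_coe_eq_iff_mem_bot {R : Type*} [CommRing R] (x : ℍ[R]) :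
    (∃ t : R, x = (t : ℍ[R])) ↔ x ∈ (⊥ : Subalgebra R ℍ[R]) := by
  simp only [Algebra.mem_bot, Set.mem_range, Quaternion.algebraMap_def, eq_comm]

/-- If `b*q`, `b*u*q`, and `b*r` are all real (with `b ≠ 0`, `q ≠ 0`), then
`b*u*r` is real. -/
theorem real_of_three_real (b q u r : ℍ[ℝ]) (hb : b ≠ 0) (hq : q ≠ 0)
    (h1 : ∃ t : ℝ, b * q = (t : ℍ[ℝ]))
    (h2 : ∃ t : ℝ, b * u * q = (t : ℍ[ℝ]))
    (h3 : ∃ t : ℝ, b * r = (t : ℍ[ℝ])) :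
    ∃ t : ℝ, b * u * r = (t : ℍ[ℝ]) := by
  simp only [Quaternion.exists_coe_eq_iff_mem_bot] at h1 h2 h3 ⊢
  have hu : u ∈ (⊥ : Subalgebra ℝ ℍ[ℝ]) := mem_bot_of_mul_mem_bot_of_mul_mul_mem_bot hb hq h1 h2
  obtain ⟨s, rfl⟩ := Algebra.mem_bot.mp hu
  rw [← Algebra.commutes, mul_assoc]
  exact Subalgebra.mul_mem _ (Subalgebra.algebraMap_mem _ s) h3
end

section
/- Let h and l be purely imaginary quaternions with l ≠ 0, and suppose l = -(h*(h*l - l*h) - (h*l - l*h)*h), i.e. l = -[h,[h,l]]. Then h*l + l*h = 0 (h and l are orthogonal) and |h|² = 1/4. -/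
open scoped Quaternion

/-!
For purely imaginary `h` the square `h * h = -|h|²` is a real scalar, and so is the
anticommutator `h * l + l * h = 2 t` with `t = (h * l).re`. Expanding the double commutator
with these two facts turns the hypothesis into `(1 - 4|h|²) • l = 4 t • h`. Multiplying by `h`
and taking real parts gives `(1 - 4|h|²) t = -4 t |h|²`, i.e. `t = 0`; then
`(1 - 4|h|²) • l = 0` with `l ≠ 0` forces `|h|² = 1/4`.
-/

theorem mul_commutator_sub_commutator_mul {A : Type*} [Ring A] {h l : A}
    (hc : Commute (h * h) l) :
    h * (h * l - l * h) - (h * l - l * h) * h = 4 * (h * h) * l - 2 * ((h * l + l * h) * h) :=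
  calc h * (h * l - l * h) - (h * l - l * h) * h
      = h * h * l + 3 * (l * (h * h)) - 2 * ((h * l + l * h) * h) := by noncomm_ring
    _ = 4 * (h * h) * l - 2 * ((h * l + l * h) * h) := by rw [← hc.eq]; noncomm_ring

namespace Quaternion

variable {R : Type*} [CommRing R] [LinearOrder R] [IsStrictOrderedRing R] {h l : ℍ[R]}

theorem mul_self_eq_neg_normSq_of_re_eq_zero (hh : h.re = 0) :
    h * h = -((normSq h : R) : ℍ[R]) := by
  rw [← sq, sq_eq_neg_normSq.mpr hh]

theorem mul_add_mul_swap_of_re_eq_zero (hh : h.re = 0) (hl : l.re = 0) :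
    h * l + l * h = ((2 * (h * l).re : R) : ℍ[R]) := by
  have hstar : star (h * l) = l * h := by
    rw [star_mul, star_eq_neg.mpr hh, star_eq_neg.mpr hl, neg_mul_neg]
  rw [← hstar, self_add_star']

theorem mul_commutator_sub_commutator_mul_of_re_eq_zero (hh : h.re = 0) (hl : l.re = 0) :
    h * (h * l - l * h) - (h * l - l * h) * h =
      -((4 * normSq h) • l + (4 * (h * l).re) • h) := by
  have hc : Commute (h * h) l := by
    rw [mul_self_eq_neg_normSq_of_re_eq_zero hh]
    exact (coe_commute _ l).neg_left
  rw [mul_commutator_sub_commutator_mul hc, mul_self_eq_neg_normSq_of_re_eq_zero hh,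
    mul_add_mul_swap_of_re_eq_zero hh hl]
  simp only [mul_neg, neg_mul, mul_assoc, coe_mul_eq_smul]
  simp only [← Nat.ofNat_nsmul_eq_mul]
  module

theorem re_mul_eq_zero_of_smul_eq (hh : h.re = 0)
    (hkey : (1 - 4 * normSq h) • l = (4 * (h * l).re) • h) : (h * l).re = 0 := by
  have hre := congrArg (fun q => (h * q).re) hkey
  simp only [mul_smul_comm, re_smul, smul_eq_mul, mul_self_eq_neg_normSq_of_re_eq_zero hh,
    re_neg, re_coe] at hre
  linear_combination hre

end Quaternion

/-- If `h`, `l` are purely imaginary, `l ≠ 0`, and `l = -[h,[h,l]]`, then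
`h` and `l` are orthogonal (`h*l + l*h = 0`) and `|h|² = 1/4`. -/
theorem orthogonal_and_norm_quarter (h l : ℍ[ℝ])
    (hh : h.re = 0) (hl : l.re = 0) (hl0 : l ≠ 0)
    (hyp : l = -(h * (h * l - l * h) - (h * l - l * h) * h)) :
    h * l + l * h = 0 ∧ Quaternion.normSq h = 1 / 4 := by
  rw [Quaternion.mul_commutator_sub_commutator_mul_of_re_eq_zero hh hl, neg_neg] at hyp
  have hkey : (1 - 4 * Quaternion.normSq h) • l = (4 * (h * l).re) • h := by
    rw [sub_smul, one_smul, ← sub_eq_iff_eq_add'.mpr hyp]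
  have horth := Quaternion.re_mul_eq_zero_of_smul_eq hh hkey
  rw [horth, mul_zero, zero_smul, smul_eq_zero] at hkey
  refine ⟨by rw [Quaternion.mul_add_mul_swap_of_re_eq_zero hh hl, horth]; simp, ?_⟩
  linarith [hkey.resolve_right hl0]
end

section
/- Let q be a nonzero purely imaginary quaternion and M a 2×2 matrix over the quaternions. Define μ(θ) = q • (θ * M) for row vectors θ ∈ ℍ² (left scalar multiplication by q and right multiplication by M), and the pairing ⟨θ, θ'⟩ = Re(θ * θ'†). Then ⟨μ(θ), θ'⟩ = ⟨θ, μ(θ')⟩ for all θ, θ' if and only if M is quaternion skew-Hermitian, i.e. M† = -M. -/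
open scoped Quaternion Matrix

/-!
Since `star q = -q`, moving `q` from one side of the pairing to the other costs a sign, so
both sides of the identity are values of the form `Re ∑ᵢⱼ q θᵢ Nᵢⱼ θ'ⱼ†`, with `N = M` on the
left and `N = -Mᴴ` on the right. This form determines `N`: testing on `θ = a eᵢ`, `θ' = eⱼ`
with `a = q⁻¹ Nᵢⱼ†` recovers `|Nᵢⱼ|²`.
-/

namespace Quaternion

variable {R : Type*}

theorem re_mul_star_eq_neg [CommRing R] {q : ℍ[R]} (hq : q.re = 0) (x : ℍ[R]) :
    (x * star q).re = -(q * x).re := by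
  simp only [re_mul, re_star, imI_star, imJ_star, imK_star, hq]; ring

theorem re_sum [CommRing R] {ι : Type*} (s : Finset ι) (f : ι → ℍ[R]) :
    (∑ i ∈ s, f i).re = ∑ i ∈ s, (f i).re :=
  map_sum (QuaternionAlgebra.reₗ (-1) 0 (-1)) f s

theorem eq_zero_of_forall_re_mul_mul_eq_zero [Field R] [LinearOrder R] [IsStrictOrderedRing R]
    {q x : ℍ[R]} (hq : q ≠ 0) (h : ∀ a, (q * a * x).re = 0) : x = 0 := by
  have hx := h (q⁻¹ * star x)
  rwa [← mul_assoc, mul_inv_cancel₀ hq, one_mul, star_mul_self, re_coe, normSq_eq_zero] at hx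

end Quaternion

open Quaternion

section TwistedForm

variable {R : Type*} {n : Type*} [Fintype n]

def twistedForm [CommRing R] (q : ℍ[R]) (N : Matrix n n ℍ[R]) (θ θ' : n → ℍ[R]) : R :=
  ∑ i, ∑ j, (q * θ i * N i j * star (θ' j)).re

theorem twistedForm_add [CommRing R] (q : ℍ[R]) (N N' : Matrix n n ℍ[R]) (θ θ' : n → ℍ[R]) :
    twistedForm q (N + N') θ θ' = twistedForm q N θ θ' + twistedForm q N' θ θ' := by
  simp only [twistedForm, Matrix.add_apply, mul_add, add_mul, re_add, Finset.sum_add_distrib]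

theorem twistedForm_single [CommRing R] [DecidableEq n] (q : ℍ[R]) (N : Matrix n n ℍ[R])
    (i j : n) (a : ℍ[R]) :
    twistedForm q N (Pi.single i a) (Pi.single j 1) = (q * a * N i j).re := by
  rw [twistedForm, Fintype.sum_eq_single i fun i' hi' => by simp [hi'],
    Fintype.sum_eq_single j fun j' hj' => by simp [hj']]
  simp

theorem forall_twistedForm_eq_zero_iff [Field R] [LinearOrder R] [IsStrictOrderedRing R]
    {q : ℍ[R]} (hq : q ≠ 0) {N : Matrix n n ℍ[R]} :
    (∀ θ θ', twistedForm q N θ θ' = 0) ↔ N = 0 := by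
  classical
  refine ⟨fun h => Matrix.ext fun i j => ?_, fun h θ θ' => by simp [h, twistedForm]⟩
  exact eq_zero_of_forall_re_mul_mul_eq_zero hq fun a => by
    rw [← twistedForm_single q N i j a, h]

theorem re_sum_mul_vecMul_mul_star [CommRing R] (q : ℍ[R]) (M : Matrix n n ℍ[R])
    (θ θ' : n → ℍ[R]) :
    (∑ j, (q * ∑ i, θ i * M i j) * star (θ' j)).re = twistedForm q M θ θ' := by
  simp only [twistedForm, Finset.mul_sum, Finset.sum_mul, re_sum]
  rw [Finset.sum_comm]
  simp only [mul_assoc]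

theorem re_sum_mul_star_vecMul [CommRing R] {q : ℍ[R]} (hq : q.re = 0) (M : Matrix n n ℍ[R])
    (θ θ' : n → ℍ[R]) :
    (∑ j, θ j * star (q * ∑ i, θ' i * M i j)).re = -twistedForm q Mᴴ θ θ' := by
  simp only [twistedForm, star_mul, star_sum, Finset.mul_sum, re_sum, Matrix.conjTranspose_apply,
    ← Finset.sum_neg_distrib, ← mul_assoc, re_mul_star_eq_neg hq]

end TwistedForm

/-- For `q` nonzero purely imaginary, `θ ↦ q • (θ * M)` is symmetric for the
pairing `⟨θ, θ'⟩ = Re (θ * θ'†)` iff `M` is quaternion skew-Hermitian. -/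
theorem symmetric_iff_skewHermitian (q : ℍ[ℝ]) (hq_im : q.re = 0) (hq : q ≠ 0)
    (M : Matrix (Fin 2) (Fin 2) ℍ[ℝ]) :
    (∀ θ θ' : Fin 2 → ℍ[ℝ],
      (∑ j, (q * ∑ i, θ i * M i j) * star (θ' j)).re =
      (∑ j, θ j * star (q * ∑ i, θ' i * M i j)).re) ↔ Mᴴ = -M := by
  simp only [re_sum_mul_vecMul_mul_star, re_sum_mul_star_vecMul hq_im, eq_neg_iff_add_eq_zero,
    ← twistedForm_add, forall_twistedForm_eq_zero_iff hq]
  rw [add_comm, add_eq_zero_iff_eq_neg]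
end
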